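/- For every positive integer n and every opener-closer configuration (O,C) ⊆ [n] × [n], there exists a unique non-crossing set partition 𝓑 of [n] and a unique non-nesting set partition 𝓑' of [n] such that op(𝓑) = op(𝓑') = O and cl(𝓑) = cl(𝓑') = C. -/

import Mathlib

open scoped Classical
noncomputable section

/-! ### Set partitions of type A -/

/-- A set partition of `[n] = {1,…,n}`: pairwise disjoint nonempty blocks covering `[n]`. -/
structure SetPartitionA (n : ℕ) where
  blocks : Finset (Finset ℕ)
  nonempty : ∀ B ∈ blocks, B.Nonempty
  disj : ∀ B ∈ blocks, ∀ B' ∈ blocks, B ≠ B' → Disjoint B B'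
  cover : ∀ i : ℕ, (∃ B ∈ blocks, i ∈ B) ↔ i ∈ Finset.Icc 1 n

/-- Two arcs `(i,j)`, `(i',j')` cross if `i<i'<j<j'` (in either order of the two arcs). -/
def ACross (a b : ℕ × ℕ) : Prop :=
  (a.1 < b.1 ∧ b.1 < a.2 ∧ a.2 < b.2) ∨ (b.1 < a.1 ∧ a.1 < b.2 ∧ b.2 < a.2)

/-- Two arcs `(i,j)`, `(i',j')` nest if `i<i'<j'<j` (in either order of the two arcs). -/
def ANest (a b : ℕ × ℕ) : Prop :=
  (a.1 < b.1 ∧ b.1 < b.2 ∧ b.2 < a.2) ∨ (b.1 < a.1 ∧ a.1 < a.2 ∧ a.2 < b.2)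

namespace SetPartitionA

variable {n : ℕ}

/-- Openers: elements of `[n]` that are not the maximum of their block. -/
def openers (P : SetPartitionA n) : Finset ℕ :=
  (Finset.Icc 1 n).filter fun i => ∃ B ∈ P.blocks, i ∈ B ∧ ∃ j ∈ B, i < j

/-- Closers: elements of `[n]` that are not the minimum of their block. -/
def closers (P : SetPartitionA n) : Finset ℕ :=
  (Finset.Icc 1 n).filter fun i => ∃ B ∈ P.blocks, i ∈ B ∧ ∃ j ∈ B, j < i

/-- `(i,j)` is an arc: `i < j` are in the same block with no block element in between. -/
def IsArc (P : SetPartitionA n) (i j : ℕ) : Prop :=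
  i < j ∧ ∃ B ∈ P.blocks, i ∈ B ∧ j ∈ B ∧ ∀ k ∈ B, ¬(i < k ∧ k < j)

/-- The finite set of arcs of `P`. -/
def arcs (P : SetPartitionA n) : Finset (ℕ × ℕ) :=
  ((Finset.Icc 1 n) ×ˢ (Finset.Icc 1 n)).filter fun p => P.IsArc p.1 p.2

/-- The number of crossings: pairs of arcs `(i,j)`, `(i',j')` with `i<i'<j<j'`. -/
def crossings (P : SetPartitionA n) : ℕ :=
  ((P.arcs ×ˢ P.arcs).filter fun q =>
    q.1.1 < q.2.1 ∧ q.2.1 < q.1.2 ∧ q.1.2 < q.2.2).card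

/-- The number of nestings: pairs of arcs `(i,j)`, `(i',j')` with `i<i'<j'<j`. -/
def nestings (P : SetPartitionA n) : ℕ :=
  ((P.arcs ×ˢ P.arcs).filter fun q =>
    q.1.1 < q.2.1 ∧ q.2.1 < q.2.2 ∧ q.2.2 < q.1.2).card

/-- The cardinality of a maximal crossing: largest set of mutually crossing arcs. -/
def maxCrossing (P : SetPartitionA n) : ℕ :=
  (P.arcs.powerset.filter fun S => ∀ a ∈ S, ∀ b ∈ S, a ≠ b → ACross a b).sup Finset.card

/-- The cardinality of a maximal nesting: largest set of mutually nesting arcs. -/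
def maxNesting (P : SetPartitionA n) : ℕ :=
  (P.arcs.powerset.filter fun S => ∀ a ∈ S, ∀ b ∈ S, a ≠ b → ANest a b).sup Finset.card

end SetPartitionA

/-! ### Set partitions of classical types B/C/D on `[±n]` -/

/-- Position of `i ∈ [±n]` in the type `C` nesting order `1<⋯<n<-n<⋯<-1`. -/
def nestOrd (n : ℕ) (i : ℤ) : ℤ := if 0 < i then i else 2 * n + 1 + i

/-- Position of `i ∈ [±n]` in the crossing order `1<⋯<n<-1<⋯<-n`. -/
def crossOrd (n : ℕ) (i : ℤ) : ℤ := if 0 < i then i else (n : ℤ) - i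

/-- Position of `i ∈ [±n] ∪ {0}` in the type `B` nesting order `1<⋯<n<0<-n<⋯<-1`. -/
def nestOrdB (n : ℕ) (i : ℤ) : ℤ :=
  if 0 < i then i else if i = 0 then (n : ℤ) + 1 else 2 * n + 2 + i

/-- The negative `-B` of a block. -/
def negSet (B : Finset ℤ) : Finset ℤ := B.image fun x => -x

/-- A set partition of type `B_n`/`C_n`: a set partition of `[±n]` with `B ∈ 𝓑 ↔ -B ∈ 𝓑`
and at most one block `B₀` with `B₀ = -B₀`. -/
structure SetPartitionC (n : ℕ) where
  blocks : Finset (Finset ℤ)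
  nonempty : ∀ B ∈ blocks, B.Nonempty
  disj : ∀ B ∈ blocks, ∀ B' ∈ blocks, B ≠ B' → Disjoint B B'
  cover : ∀ i : ℤ, (∃ B ∈ blocks, i ∈ B) ↔ (i ≠ 0 ∧ |i| ≤ (n : ℤ))
  symm : ∀ B ∈ blocks, negSet B ∈ blocks
  zeroBlock : ∀ B ∈ blocks, ∀ B' ∈ blocks, negSet B = B → negSet B' = B' → B = B'

/-- Endpoints of an arc, ordered by the crossing order. -/
def cpr (n : ℕ) (p : ℤ × ℤ) : ℤ × ℤ :=
  (min (crossOrd n p.1) (crossOrd n p.2), max (crossOrd n p.1) (crossOrd n p.2))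

/-- `p` crosses `q` with `p` coming first in the crossing order. -/
def CrossRel (n : ℕ) (p q : ℤ × ℤ) : Prop :=
  (cpr n p).1 < (cpr n q).1 ∧ (cpr n q).1 < (cpr n p).2 ∧ (cpr n p).2 < (cpr n q).2

/-- The two arcs `p`, `q` cross in the crossing diagram. -/
def Crosses (n : ℕ) (p q : ℤ × ℤ) : Prop := CrossRel n p q ∨ CrossRel n q p

/-- `p` nests over `q` in the nesting diagram (arcs written in nesting order). -/
def NestRel (n : ℕ) (p q : ℤ × ℤ) : Prop :=
  nestOrd n p.1 < nestOrd n q.1 ∧ nestOrd n q.2 < nestOrd n p.2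

/-- The two arcs `p`, `q` nest in the nesting diagram. -/
def Nests (n : ℕ) (p q : ℤ × ℤ) : Prop := NestRel n p q ∨ NestRel n q p

/-- `p` nests over `q` in the type `B` nesting diagram. -/
def NestRelB (n : ℕ) (p q : ℤ × ℤ) : Prop :=
  nestOrdB n p.1 < nestOrdB n q.1 ∧ nestOrdB n q.2 < nestOrdB n p.2

/-- The two arcs `p`, `q` nest in the type `B` nesting diagram. -/
def NestsB (n : ℕ) (p q : ℤ × ℤ) : Prop := NestRelB n p q ∨ NestRelB n q p

/-- Exceptional pairs for type `B` crossings: both arcs have positive opener and negative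
closer, and at least one closer is smaller in absolute value than its opener. -/
def ExcCross (p q : ℤ × ℤ) : Prop :=
  0 < p.1 ∧ p.2 < 0 ∧ 0 < q.1 ∧ q.2 < 0 ∧ (|p.2| < |p.1| ∨ |q.2| < |q.1|)

/-- Exceptional pairs for type `B` nestings: both arcs have positive opener (or begin at `0`)
and negative closer (or end at `0`), and at least one closer is smaller in absolute value
than its opener. -/
def ExcNest (p q : ℤ × ℤ) : Prop :=
  0 ≤ p.1 ∧ p.2 ≤ 0 ∧ 0 ≤ q.1 ∧ q.2 ≤ 0 ∧ (|p.2| < |p.1| ∨ |q.2| < |q.1|)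

/-- A block augmented by `0` if it is the zero block. -/
def augB (B : Finset ℤ) : Finset ℤ := if negSet B = B then insert 0 B else B

/-- The arc `p` contains `n`. -/
def ContainsN (n : ℕ) (p : ℤ × ℤ) : Prop := p.1 = (n : ℤ) ∨ p.2 = (n : ℤ)

/-- The arc `p` contains `-n`. -/
def ContainsNegN (n : ℕ) (p : ℤ × ℤ) : Prop := p.1 = -(n : ℤ) ∨ p.2 = -(n : ℤ)

namespace SetPartitionC

variable {n : ℕ}

/-- The ground set `[±n]` as a finset of integers. -/
def pmn (n : ℕ) : Finset ℤ := (Finset.Icc (-(n : ℤ)) (n : ℤ)).erase 0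

/-- `(i,j)` is an arc: `i`, `j` are consecutive elements of a block in the nesting order. -/
def IsArc (P : SetPartitionC n) (i j : ℤ) : Prop :=
  nestOrd n i < nestOrd n j ∧ ∃ B ∈ P.blocks, i ∈ B ∧ j ∈ B ∧
    ∀ k ∈ B, ¬(nestOrd n i < nestOrd n k ∧ nestOrd n k < nestOrd n j)

/-- The finite set of arcs of `P` (written in nesting order). -/
def arcs (P : SetPartitionC n) : Finset (ℤ × ℤ) :=
  (pmn n ×ˢ pmn n).filter fun p => P.IsArc p.1 p.2

/-- Openers: positive elements that are not maximal in their block w.r.t. the nesting order. -/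
def openers (P : SetPartitionC n) : Finset ℤ :=
  (Finset.Icc 1 (n : ℤ)).filter fun i =>
    ∃ B ∈ P.blocks, i ∈ B ∧ ∃ j ∈ B, nestOrd n i < nestOrd n j

/-- Closers: positive elements that are not minimal in their block w.r.t. the nesting order. -/
def closers (P : SetPartitionC n) : Finset ℤ :=
  (Finset.Icc 1 (n : ℤ)).filter fun i =>
    ∃ B ∈ P.blocks, i ∈ B ∧ ∃ j ∈ B, nestOrd n j < nestOrd n i

/-- The number of crossings of a type `C` set partition. -/
def crossings (P : SetPartitionC n) : ℕ :=
  ((P.arcs ×ˢ P.arcs).filter fun q => CrossRel n q.1 q.2).card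

/-- The number of nestings of a type `C` set partition. -/
def nestings (P : SetPartitionC n) : ℕ :=
  ((P.arcs ×ˢ P.arcs).filter fun q => NestRel n q.1 q.2).card

/-- The number of crossings among pairs of arcs that both have positive opener. -/
def crossingsPos (P : SetPartitionC n) : ℕ :=
  (((P.arcs.filter fun p => 0 < p.1) ×ˢ (P.arcs.filter fun p => 0 < p.1)).filter
    fun q => CrossRel n q.1 q.2).card

/-- The number of nestings among pairs of arcs that both have positive opener. -/
def nestingsPos (P : SetPartitionC n) : ℕ :=
  (((P.arcs.filter fun p => 0 < p.1) ×ˢ (P.arcs.filter fun p => 0 < p.1)).filter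
    fun q => NestRel n q.1 q.2).card

/-- The cardinality of a maximal crossing. -/
def maxCrossing (P : SetPartitionC n) : ℕ :=
  (P.arcs.powerset.filter fun S => ∀ a ∈ S, ∀ b ∈ S, a ≠ b → Crosses n a b).sup Finset.card

/-- The cardinality of a maximal nesting. -/
def maxNesting (P : SetPartitionC n) : ℕ :=
  (P.arcs.powerset.filter fun S => ∀ a ∈ S, ∀ b ∈ S, a ≠ b → Nests n a b).sup Finset.card

/-! ### Type B notions -/

/-- `(i,j)` is a type `B` nesting arc: consecutive elements of an augmented block in the
type `B` nesting order. -/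
def IsArcB (P : SetPartitionC n) (i j : ℤ) : Prop :=
  nestOrdB n i < nestOrdB n j ∧ ∃ B ∈ P.blocks, i ∈ augB B ∧ j ∈ augB B ∧
    ∀ k ∈ augB B, ¬(nestOrdB n i < nestOrdB n k ∧ nestOrdB n k < nestOrdB n j)

/-- The finite set of type `B` nesting arcs of `P`. -/
def arcsB (P : SetPartitionC n) : Finset (ℤ × ℤ) :=
  ((insert 0 (pmn n)) ×ˢ (insert 0 (pmn n))).filter fun p => P.IsArcB p.1 p.2

/-- The number of type `B` crossings. -/
def crossingsB (P : SetPartitionC n) : ℕ :=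
  ((P.arcs ×ˢ P.arcs).filter fun q => CrossRel n q.1 q.2 ∧ ¬ExcCross q.1 q.2).card

/-- The number of type `B` nestings. -/
def nestingsB (P : SetPartitionC n) : ℕ :=
  ((P.arcsB ×ˢ P.arcsB).filter fun q => NestRelB n q.1 q.2 ∧ ¬ExcNest q.1 q.2).card

/-- Openers in type `B`: positive elements not maximal in their block
w.r.t. the type `B` nesting order. -/
def openersB (P : SetPartitionC n) : Finset ℤ :=
  (Finset.Icc 1 (n : ℤ)).filter fun i =>
    ∃ B ∈ P.blocks, i ∈ B ∧ ∃ j ∈ B, nestOrdB n i < nestOrdB n j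

/-- Closers in type `B`: positive elements not minimal in their block
w.r.t. the type `B` nesting order. -/
def closersB (P : SetPartitionC n) : Finset ℤ :=
  (Finset.Icc 1 (n : ℤ)).filter fun i =>
    ∃ B ∈ P.blocks, i ∈ B ∧ ∃ j ∈ B, nestOrdB n j < nestOrdB n i

/-- The cardinality of a maximal type `B` crossing. -/
def maxCrossingB (P : SetPartitionC n) : ℕ :=
  (P.arcs.powerset.filter fun S =>
    ∀ a ∈ S, ∀ b ∈ S, a ≠ b → Crosses n a b ∧ ¬ExcCross a b).sup Finset.card

/-- The cardinality of a maximal type `B` nesting. -/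
def maxNestingB (P : SetPartitionC n) : ℕ :=
  (P.arcsB.powerset.filter fun S =>
    ∀ a ∈ S, ∀ b ∈ S, a ≠ b → NestsB n a b ∧ ¬ExcNest a b).sup Finset.card

/-! ### Type D notions -/

/-- A type `C` set partition is of type `D` if the zero block, when present, is not a single
pair `{i,-i}`. -/
def IsTypeD (P : SetPartitionC n) : Prop :=
  ∀ B ∈ P.blocks, negSet B = B → B.card ≠ 2

/-- The arcs starting in `{1,…,n-1}` and ending in the negative of an element of `{1,…,n-1}`. -/
def pnArcs (P : SetPartitionC n) : Finset (ℤ × ℤ) :=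
  P.arcs.filter fun p => 0 < p.1 ∧ p.1 < (n : ℤ) ∧ -(n : ℤ) < p.2 ∧ p.2 < 0

/-- The index `l` of an arc `a = (i_l, -j_l)` in the list of `pnArcs` ordered by openers. -/
def dRank (P : SetPartitionC n) (a : ℤ × ℤ) : ℕ :=
  (P.pnArcs.filter fun b => b.1 ≤ a.1).card

/-- The crossings allowed in a non-crossing set partition of type `D`. -/
def AllowedCrossD (P : SetPartitionC n) (p q : ℤ × ℤ) : Prop :=
  (ContainsN n p ∧ q ∈ P.pnArcs ∧ P.pnArcs.card < 2 * P.dRank q) ∨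
  (ContainsN n q ∧ p ∈ P.pnArcs ∧ P.pnArcs.card < 2 * P.dRank p) ∨
  (ContainsNegN n p ∧ q ∈ P.pnArcs ∧ 2 * P.dRank q ≤ P.pnArcs.card) ∨
  (ContainsNegN n q ∧ p ∈ P.pnArcs ∧ 2 * P.dRank p ≤ P.pnArcs.card) ∨
  (ContainsN n p ∧ ContainsNegN n q) ∨
  (ContainsN n q ∧ ContainsNegN n p)

/-- `P` is a non-crossing set partition of type `D_n`. -/
def NonCrossingD (P : SetPartitionC n) : Prop :=
  (∀ i : ℤ, 0 < i → P.IsArc i (-i) → i = n) ∧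
  (∀ p ∈ P.arcs, ∀ q ∈ P.arcs, Crosses n p q → P.AllowedCrossD p q) ∧
  (∀ p ∈ P.arcs, ContainsN n p →
    ∀ q ∈ P.pnArcs, P.pnArcs.card < 2 * P.dRank q → Crosses n p q) ∧
  (∀ p ∈ P.arcs, ContainsNegN n p →
    ∀ q ∈ P.pnArcs, 2 * P.dRank q ≤ P.pnArcs.card → Crosses n p q)

/-- The nestings (`p` over `q`) allowed in a non-nesting set partition of type `D`. -/
def AllowedNestD (P : SetPartitionC n) (p q : ℤ × ℤ) : Prop :=
  (0 < p.1 ∧ p.1 < q.1 ∧ q.1 < (n : ℤ) ∧ p.2 = -(n : ℤ) ∧ q.2 = (n : ℤ)) ∨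
  (q.1 = (n : ℤ) ∧ q.2 = -(n : ℤ) ∧ 0 < p.1 ∧ p.1 < (n : ℤ) ∧ -(n : ℤ) < p.2 ∧ p.2 < 0 ∧
    ∃ m : ℤ, 0 < m ∧ m < p.1 ∧ m < -p.2 ∧ P.IsArc m (n : ℤ))

/-- `P` is a non-nesting set partition of type `D_n`. -/
def NonNestingD (P : SetPartitionC n) : Prop :=
  (∀ i : ℤ, 0 < i → P.IsArc i (-i) → i = n) ∧
  (∀ p ∈ P.arcs, ∀ q ∈ P.arcs, NestRel n p q → P.AllowedNestD p q)

end SetPartitionC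

/-! ### The staircase polyomino and chains in fillings -/

/-- The cells of the staircase polyomino `P_n`: `(c,r)` with `1 ≤ c ≤ n`, `c ≤ r ≤ 2n-1`. -/
def cellsP (n : ℕ) : Finset (ℕ × ℕ) :=
  ((Finset.Icc 1 n) ×ˢ (Finset.Icc 1 (2 * n - 1))).filter fun p => p.1 ≤ p.2

/-- The length of the longest north-east chain among a set of (nonzero) cells:
columns strictly increase while rows strictly decrease. -/
def neLen (S : Finset (ℕ × ℕ)) : ℕ :=
  (S.powerset.filter fun T =>
    ∀ a ∈ T, ∀ b ∈ T, a ≠ b →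
      (a.1 < b.1 ∧ b.2 < a.2) ∨ (b.1 < a.1 ∧ a.2 < b.2)).sup Finset.card

/-- The length of the longest south-east chain among a set of (nonzero) cells:
columns and rows strictly increase, and the surrounding rectangle lies in the polyomino
(`a.1 ≤ b.2` for all cells `a`, `b` of the chain). -/
def seLen (S : Finset (ℕ × ℕ)) : ℕ :=
  (S.powerset.filter fun T =>
    (∀ a ∈ T, ∀ b ∈ T, a ≠ b →
      (a.1 < b.1 ∧ a.2 < b.2) ∨ (b.1 < a.1 ∧ b.2 < a.2)) ∧
    ∀ a ∈ T, ∀ b ∈ T, a.1 ≤ b.2).sup Finset.card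

namespace SetPartitionC

variable {n : ℕ}

/-- The cells filled with `1` in the nesting filling of the staircase polyomino: rows are
labelled from top to bottom by `2,…,n,-n,…,-1`; the cell in column `i` and row labelled `j`
is filled iff `(i,j)` is an arc with positive opener `i`. -/
def nestFill (P : SetPartitionC n) : Finset (ℕ × ℕ) :=
  (cellsP n).filter fun c => ∃ j : ℤ, P.IsArc (c.1 : ℤ) j ∧ nestOrd n j = (c.2 : ℤ) + 1

/-- The cells filled with `1` in the crossing filling of the staircase polyomino: rows are
labelled from top to bottom by `2,…,n,-1,…,-n`; the cell in column `i` and row labelled `j`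
is filled iff `(i,j)` is an arc with positive opener `i`. -/
def crossFill (P : SetPartitionC n) : Finset (ℕ × ℕ) :=
  (cellsP n).filter fun c => ∃ j : ℤ, P.IsArc (c.1 : ℤ) j ∧ crossOrd n j = (c.2 : ℤ) + 1

end SetPartitionC

/-! ### Triangulations of the symmetric 2n-gon and symmetric fans of Dyck paths -/

/-- `p` is a diagonal of the `2n`-gon with vertices labelled by `[±n]`, written with its two
(distinct) endpoints in crossing order. -/
def IsDiag (n : ℕ) (p : ℤ × ℤ) : Prop :=
  p.1 ≠ 0 ∧ p.2 ≠ 0 ∧ |p.1| ≤ (n : ℤ) ∧ |p.2| ≤ (n : ℤ) ∧ crossOrd n p.1 < crossOrd n p.2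

/-- Normalize a pair so that its endpoints are in crossing order. -/
def normD (n : ℕ) (p : ℤ × ℤ) : ℤ × ℤ :=
  if crossOrd n p.1 < crossOrd n p.2 then p else (p.2, p.1)

/-- `ω` contains `m` mutually crossing diagonals. -/
def HasMCross (n m : ℕ) (ω : Finset (ℤ × ℤ)) : Prop :=
  ∃ S ⊆ ω, S.card = m ∧ ∀ a ∈ S, ∀ b ∈ S, a ≠ b → Crosses n a b

/-- A type `C_n` `k`-triangulation: a symmetric set of diagonals with no `(k+1)`-crossing,
maximal with this property. -/
def IsTriangC (n k : ℕ) (ω : Finset (ℤ × ℤ)) : Prop :=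
  (∀ p ∈ ω, IsDiag n p) ∧
  (∀ p ∈ ω, normD n (-p.1, -p.2) ∈ ω) ∧
  ¬HasMCross n (k + 1) ω ∧
  ∀ d : ℤ × ℤ, IsDiag n d → d ∉ ω → HasMCross n (k + 1) (insert d ω)

/-- A Dyck path in the staircase polyomino starting at the top cell `(i,i)` of column `i`,
proceeding by unit south or west steps inside `P_n`, and ending on the main diagonal
`r = 2n - c`. -/
def IsDyckPath (n i : ℕ) (l : List (ℕ × ℕ)) : Prop :=
  l ≠ [] ∧ l.head? = some (i, i) ∧ (∀ c ∈ l, c ∈ cellsP n) ∧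
  l.Chain' (fun a b => (b.1 = a.1 ∧ b.2 = a.2 + 1) ∨ (b.1 + 1 = a.1 ∧ b.2 = a.2)) ∧
  ∀ c : ℕ × ℕ, l.getLast? = some c → c.2 = 2 * n - c.1

/-- A symmetric fan of `k` non-intersecting Dyck paths: the `i`-th path starts at cell
`(i,i)` and the paths are pairwise cell-disjoint. -/
def IsSymFan (n k : ℕ) (f : Fin k → List (ℕ × ℕ)) : Prop :=
  (∀ i : Fin k, IsDyckPath n ((i : ℕ) + 1) (f i)) ∧
  ∀ i j : Fin k, i ≠ j → ∀ c ∈ f i, c ∉ f j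


/-!
A set partition is determined by its arcs, and the arc sets of set partitions with openers `O`
and closers `C` are exactly the matchings of `O` to `C` in which every arc goes from an opener to
a larger closer. So it suffices to show that there is exactly one non-crossing and exactly one
non-nesting such matching. Both follow by induction on `|C|`: the minimal closer `c` must be
matched to the largest opener below `c` in the non-crossing case, and to the smallest opener in
the non-nesting case; the opener-closer condition guarantees that this opener exists and is
preserved when the pair is removed.
-/

namespace Relation

variable {α : Type*} {r : α → α → Prop} {a b : α}

/-- In a graph where every vertex has at most one outgoing and one incoming edge, the components
are paths or cycles, so any two connected vertices are joined by a directed path. -/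
theorem EqvGen.reflTransGen_or_reflTransGen (hr : Relator.RightUnique r)
    (hl : Relator.LeftUnique r) (h : EqvGen r a b) :
    ReflTransGen r a b ∨ ReflTransGen r b a := by
  have hl' : Relator.RightUnique (Function.swap r) := fun _ _ _ h₁ h₂ => hl h₁ h₂
  induction h with
  | rel x y hxy => exact .inl (.single hxy)
  | refl x => exact .inl .refl
  | symm x y _ ih => exact ih.symm
  | trans x y z _ _ ihxy ihyz =>
    rcases ihxy with hxy | hyx <;> rcases ihyz with hyz | hzy
    · exact .inl (hxy.trans hyz)
    · exact ((ReflTransGen.total_of_right_unique hl' (reflTransGen_swap.2 hxy)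
        (reflTransGen_swap.2 hzy)).imp reflTransGen_swap.1 reflTransGen_swap.1).symm
    · exact ReflTransGen.total_of_right_unique hr hyx hyz
    · exact .inr (hzy.trans hyx)

theorem ReflTransGen.le [Preorder α] (hmono : ∀ x y, r x y → x ≤ y) (h : ReflTransGen r a b) :
    a ≤ b := by
  simpa only [reflTransGen_eq_self] using ReflTransGen.mono hmono _ _ h

theorem EqvGen.reflTransGen_of_le [PartialOrder α] (hr : Relator.RightUnique r)
    (hl : Relator.LeftUnique r) (hmono : ∀ x y, r x y → x ≤ y) (h : EqvGen r a b)
    (hab : a ≤ b) : ReflTransGen r a b := by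
  rcases h.reflTransGen_or_reflTransGen hr hl with h | h
  · exact h
  · rw [le_antisymm hab (h.le hmono)]

end Relation

namespace ArcDiagram

open Finset

/-- The arc sets of the set partitions with openers `O` and closers `C` are exactly the `A` with
`IsMatching O C A`. -/
structure IsMatching (O C : Finset ℕ) (A : Finset (ℕ × ℕ)) : Prop where
  fst_lt_snd : ∀ p ∈ A, p.1 < p.2
  injOn_fst : Set.InjOn Prod.fst (A : Set (ℕ × ℕ))
  injOn_snd : Set.InjOn Prod.snd (A : Set (ℕ × ℕ))
  image_fst : A.image Prod.fst = O
  image_snd : A.image Prod.snd = C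

def NoCrossing (A : Finset (ℕ × ℕ)) : Prop :=
  ∀ p ∈ A, ∀ q ∈ A, ¬(p.1 < q.1 ∧ q.1 < p.2 ∧ p.2 < q.2)

def NoNesting (A : Finset (ℕ × ℕ)) : Prop :=
  ∀ p ∈ A, ∀ q ∈ A, ¬(p.1 < q.1 ∧ q.1 < q.2 ∧ q.2 < p.2)

variable {O C : Finset ℕ} {A : Finset (ℕ × ℕ)}

namespace IsMatching

theorem fst_mem (h : IsMatching O C A) {p : ℕ × ℕ} (hp : p ∈ A) : p.1 ∈ O :=
  h.image_fst ▸ mem_image_of_mem _ hp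

theorem snd_mem (h : IsMatching O C A) {p : ℕ × ℕ} (hp : p ∈ A) : p.2 ∈ C :=
  h.image_snd ▸ mem_image_of_mem _ hp

theorem exists_fst_eq (h : IsMatching O C A) {o : ℕ} (ho : o ∈ O) : ∃ p ∈ A, p.1 = o := by
  simpa only [← h.image_fst, mem_image] using ho

theorem exists_snd_eq (h : IsMatching O C A) {c : ℕ} (hc : c ∈ C) : ∃ p ∈ A, p.2 = c := by
  simpa only [← h.image_snd, mem_image] using hc

theorem rightUnique (h : IsMatching O C A) : Relator.RightUnique fun a b => (a, b) ∈ A :=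
  fun _ _ _ hab hac => congrArg Prod.snd (h.injOn_fst hab hac rfl)

theorem leftUnique (h : IsMatching O C A) : Relator.LeftUnique fun a b => (a, b) ∈ A :=
  fun _ _ _ hac hbc => congrArg Prod.fst (h.injOn_snd hac hbc rfl)

theorem empty : IsMatching ∅ ∅ ∅ :=
  ⟨by simp, by simp, by simp, image_empty _, image_empty _⟩

theorem eq_empty (h : IsMatching O ∅ A) : A = ∅ :=
  image_eq_empty.1 h.image_snd

theorem snd_lt_snd (h : IsMatching O C A) {p q : ℕ × ℕ} (hp : p ∈ A) (hmin : ∀ c ∈ C, p.2 ≤ c)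
    (hq : q ∈ A) (hqp : q ≠ p) : p.2 < q.2 :=
  (hmin _ (h.snd_mem hq)).lt_of_ne fun heq => hqp (h.injOn_snd hq hp heq.symm)

theorem erase (h : IsMatching O C A) {p : ℕ × ℕ} (hp : p ∈ A) :
    IsMatching (O.erase p.1) (C.erase p.2) (A.erase p) where
  fst_lt_snd q hq := h.fst_lt_snd q (mem_of_mem_erase hq)
  injOn_fst := h.injOn_fst.mono (by simp)
  injOn_snd := h.injOn_snd.mono (by simp)
  image_fst := by
    ext x
    simp only [mem_image, mem_erase, ← h.image_fst]
    constructor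
    · rintro ⟨q, ⟨hqp, hq⟩, rfl⟩
      exact ⟨fun hx => hqp (h.injOn_fst hq hp hx), q, hq, rfl⟩
    · rintro ⟨hx, q, hq, rfl⟩
      exact ⟨q, ⟨by rintro rfl; exact hx rfl, hq⟩, rfl⟩
  image_snd := by
    ext x
    simp only [mem_image, mem_erase, ← h.image_snd]
    constructor
    · rintro ⟨q, ⟨hqp, hq⟩, rfl⟩
      exact ⟨fun hx => hqp (h.injOn_snd hq hp hx), q, hq, rfl⟩
    · rintro ⟨hx, q, hq, rfl⟩
      exact ⟨q, ⟨by rintro rfl; exact hx rfl, hq⟩, rfl⟩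

theorem insert {o c : ℕ} (h : IsMatching (O.erase o) (C.erase c) A) (ho : o ∈ O) (hc : c ∈ C)
    (hoc : o < c) : IsMatching O C (insert (o, c) A) where
  fst_lt_snd p hp := by
    rcases mem_insert.1 hp with rfl | hp
    exacts [hoc, h.fst_lt_snd p hp]
  injOn_fst := by
    have hne : ∀ q ∈ A, q.1 ≠ o := fun q hq => (mem_erase.1 (h.fst_mem hq)).1
    rw [coe_insert, Set.injOn_insert fun hmem => hne _ hmem rfl]
    exact ⟨h.injOn_fst, fun ⟨q, hq, hqo⟩ => hne q hq hqo⟩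
  injOn_snd := by
    have hne : ∀ q ∈ A, q.2 ≠ c := fun q hq => (mem_erase.1 (h.snd_mem hq)).1
    rw [coe_insert, Set.injOn_insert fun hmem => hne _ hmem rfl]
    exact ⟨h.injOn_snd, fun ⟨q, hq, hqc⟩ => hne q hq hqc⟩
  image_fst := by rw [image_insert, h.image_fst, insert_erase ho]
  image_snd := by rw [image_insert, h.image_snd, insert_erase hc]

theorem eq_of_agree_at_min {Φ : Finset (ℕ × ℕ) → Prop} (hΦ : ∀ A B, B ⊆ A → Φ A → Φ B)
    (hagree : ∀ O C A₁ A₂, IsMatching O C A₁ → Φ A₁ → IsMatching O C A₂ → Φ A₂ →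
      ∀ p₁ ∈ A₁, ∀ p₂ ∈ A₂, p₁.2 = p₂.2 → (∀ c ∈ C, p₁.2 ≤ c) → p₁.1 = p₂.1)
    {A₁ A₂ : Finset (ℕ × ℕ)} (h₁ : IsMatching O C A₁) (hΦ₁ : Φ A₁) (h₂ : IsMatching O C A₂)
    (hΦ₂ : Φ A₂) : A₁ = A₂ := by
  induction hk : A₁.card generalizing O C A₁ A₂ with
  | zero =>
    rw [card_eq_zero] at hk
    subst hk
    obtain rfl : C = ∅ := by rw [← h₁.image_snd, image_empty]
    exact h₂.eq_empty.symm
  | succ k ih =>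
    have hC : C.Nonempty := by
      rw [← h₁.image_snd]
      exact image_nonempty.2 (card_pos.1 (by omega))
    obtain ⟨p₁, hp₁, hc₁⟩ := h₁.exists_snd_eq (C.min'_mem hC)
    obtain ⟨p₂, hp₂, hc₂⟩ := h₂.exists_snd_eq (C.min'_mem hC)
    have hmin : ∀ c ∈ C, p₁.2 ≤ c := fun c hc => hc₁ ▸ C.min'_le c hc
    obtain rfl : p₁ = p₂ :=
      Prod.ext (hagree O C A₁ A₂ h₁ hΦ₁ h₂ hΦ₂ p₁ hp₁ p₂ hp₂ (hc₁.trans hc₂.symm) hmin)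
        (hc₁.trans hc₂.symm)
    have := ih (h₁.erase hp₁) (hΦ _ _ (erase_subset _ _) hΦ₁) (h₂.erase hp₂)
      (hΦ _ _ (erase_subset _ _) hΦ₂) (by rw [card_erase_of_mem hp₁, hk]; rfl)
    rw [← insert_erase hp₁, ← insert_erase hp₂, this]

end IsMatching

/-- The paper's condition `|O ∩ [k]| ≥ |C ∩ [k+1]|`, written with `t = k + 1`. -/
def IsOpenerCloserConfig (O C : Finset ℕ) : Prop :=
  O.card = C.card ∧ ∀ t, (C.filter (· ≤ t)).card ≤ (O.filter (· < t)).card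

theorem isOpenerCloserConfig_of_subset_Icc {n : ℕ}
    (hO : O ⊆ Icc 1 n) (hC : C ⊆ Icc 1 n) (hcard : O.card = C.card)
    (hdom : ∀ k < n, (C ∩ Icc 1 (k + 1)).card ≤ (O ∩ Icc 1 k).card) :
    IsOpenerCloserConfig O C := by
  refine ⟨hcard, fun t => ?_⟩
  have hCt : ∀ t, C.filter (· ≤ t) = C ∩ Icc 1 t := fun t => by
    rw [← filter_mem_eq_inter]
    exact filter_congr fun x hx => by
      have := mem_Icc.1 (hC hx)
      simp only [mem_Icc]
      omega
  have hOt : ∀ t, O.filter (· < t) = O ∩ Icc 1 (t - 1) := fun t => by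
    rw [← filter_mem_eq_inter]
    exact filter_congr fun x hx => by
      have := mem_Icc.1 (hO hx)
      simp only [mem_Icc]
      omega
  rcases Nat.eq_zero_or_pos t with rfl | ht
  · rw [hCt]
    simp
  rcases le_or_gt t n with htn | hnt
  · rw [hCt, hOt, ← Nat.sub_add_cancel ht]
    exact hdom (t - 1) (by omega)
  · rw [filter_true_of_mem fun x hx => (mem_Icc.1 (hO hx)).2.trans_lt hnt, hcard]
    exact card_filter_le _ _

namespace IsOpenerCloserConfig

theorem exists_lt_min' (h : IsOpenerCloserConfig O C) (hC : C.Nonempty) :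
    ∃ o ∈ O, o < C.min' hC := by
  have hpos : 0 < (C.filter (· ≤ C.min' hC)).card :=
    card_pos.2 ⟨_, mem_filter.2 ⟨C.min'_mem hC, le_rfl⟩⟩
  obtain ⟨o, ho⟩ := card_pos.1 (hpos.trans_le (h.2 _))
  exact ⟨o, (mem_filter.1 ho).1, (mem_filter.1 ho).2⟩

theorem erase_min' (h : IsOpenerCloserConfig O C) (hC : C.Nonempty) {o : ℕ} (ho : o ∈ O)
    (hoc : o < C.min' hC) : IsOpenerCloserConfig (O.erase o) (C.erase (C.min' hC)) := by
  refine ⟨by rw [card_erase_of_mem ho, card_erase_of_mem (C.min'_mem hC), h.1], fun t => ?_⟩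
  rw [filter_erase, filter_erase]
  by_cases hct : C.min' hC ≤ t
  · have hcmem : C.min' hC ∈ C.filter (· ≤ t) := mem_filter.2 ⟨C.min'_mem hC, hct⟩
    have homem : o ∈ O.filter (· < t) := mem_filter.2 ⟨ho, hoc.trans_le hct⟩
    rw [card_erase_of_mem hcmem, card_erase_of_mem homem]
    exact Nat.sub_le_sub_right (h.2 t) 1
  · have hempty : C.filter (· ≤ t) = ∅ :=
      filter_eq_empty_iff.2 fun x hx hxt => hct ((C.min'_le x hx).trans hxt)
    simp [hempty]

theorem exists_isMatching {Φ : Finset (ℕ × ℕ) → Prop} (hΦ : Φ ∅)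
    (hstep : ∀ O C, IsOpenerCloserConfig O C → ∀ hC : C.Nonempty, ∃ o ∈ O, o < C.min' hC ∧
      ∀ A, Φ A → (∀ q ∈ A, q.1 ∈ O.erase o) → (∀ q ∈ A, C.min' hC < q.2) →
        Φ (insert (o, C.min' hC) A))
    (h : IsOpenerCloserConfig O C) : ∃ A, IsMatching O C A ∧ Φ A := by
  induction hk : C.card generalizing O C with
  | zero =>
    rw [card_eq_zero] at hk
    subst hk
    obtain rfl : O = ∅ := card_eq_zero.1 h.1
    exact ⟨∅, .empty, hΦ⟩
  | succ k ih =>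
    have hC : C.Nonempty := card_pos.1 (by omega)
    obtain ⟨o, ho, hoc, hins⟩ := hstep O C h hC
    obtain ⟨A, hA, hΦA⟩ := ih (h.erase_min' hC ho hoc)
      (by rw [card_erase_of_mem (C.min'_mem hC), hk]; rfl)
    refine ⟨insert (o, C.min' hC) A, hA.insert ho (C.min'_mem hC) hoc, hins A hΦA
      (fun q hq => hA.fst_mem hq) fun q hq => ?_⟩
    obtain ⟨hne, hqC⟩ := mem_erase.1 (hA.snd_mem hq)
    exact (C.min'_le _ hqC).lt_of_ne hne.symm

end IsOpenerCloserConfig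

theorem NoCrossing.mono {A B : Finset (ℕ × ℕ)} (hBA : B ⊆ A) (hA : NoCrossing A) :
    NoCrossing B :=
  fun p hp q hq => hA p (hBA hp) q (hBA hq)

theorem NoNesting.mono {A B : Finset (ℕ × ℕ)} (hBA : B ⊆ A) (hA : NoNesting A) :
    NoNesting B :=
  fun p hp q hq => hA p (hBA hp) q (hBA hq)

theorem NoCrossing.insert {o c : ℕ} (hA : NoCrossing A) (hc : ∀ q ∈ A, c < q.2)
    (ho : ∀ q ∈ A, q.1 < c → q.1 < o) : NoCrossing (insert (o, c) A) := by
  intro p hp q hq hpq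
  rcases mem_insert.1 hp with rfl | hp <;> rcases mem_insert.1 hq with rfl | hq
  · exact lt_irrefl _ hpq.1
  · exact (ho q hq hpq.2.1).not_gt hpq.1
  · exact (hc p hp).not_gt hpq.2.2
  · exact hA p hp q hq hpq

theorem NoNesting.insert {o c : ℕ} (hA : NoNesting A) (hc : ∀ q ∈ A, c < q.2)
    (ho : ∀ q ∈ A, o < q.1) : NoNesting (insert (o, c) A) := by
  intro p hp q hq hpq
  rcases mem_insert.1 hp with rfl | hp <;> rcases mem_insert.1 hq with rfl | hq
  · exact lt_irrefl _ hpq.1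
  · exact (hc q hq).not_gt hpq.2.2
  · exact (ho p hp).not_gt hpq.1
  · exact hA p hp q hq hpq

theorem NoCrossing.le_fst (hA : NoCrossing A) (h : IsMatching O C A) {p : ℕ × ℕ} (hp : p ∈ A)
    (hmin : ∀ c ∈ C, p.2 ≤ c) {o : ℕ} (ho : o ∈ O) (hop : o < p.2) : o ≤ p.1 := by
  obtain ⟨q, hq, rfl⟩ := h.exists_fst_eq ho
  by_contra! hpq
  exact hA p hp q hq ⟨hpq, hop, h.snd_lt_snd hp hmin hq (by rintro rfl; exact lt_irrefl _ hpq)⟩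

theorem NoNesting.fst_le (hA : NoNesting A) (h : IsMatching O C A) {p : ℕ × ℕ} (hp : p ∈ A)
    (hmin : ∀ c ∈ C, p.2 ≤ c) {o : ℕ} (ho : o ∈ O) : p.1 ≤ o := by
  obtain ⟨q, hq, rfl⟩ := h.exists_fst_eq ho
  by_contra! hqp
  exact hA q hq p hp ⟨hqp, h.fst_lt_snd p hp,
    h.snd_lt_snd hp hmin hq (by rintro rfl; exact lt_irrefl _ hqp)⟩

theorem existsUnique_noCrossing (h : IsOpenerCloserConfig O C) :
    ∃! A, IsMatching O C A ∧ NoCrossing A := by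
  obtain ⟨A, hA, hAnc⟩ := h.exists_isMatching (Φ := NoCrossing) (by simp [NoCrossing])
    fun O C hOC hC => by
      obtain ⟨o', ho', ho'c⟩ := hOC.exists_lt_min' hC
      have hne : (O.filter (· < C.min' hC)).Nonempty := ⟨o', mem_filter.2 ⟨ho', ho'c⟩⟩
      obtain ⟨ho, hoc⟩ := mem_filter.1 ((O.filter (· < C.min' hC)).max'_mem hne)
      refine ⟨_, ho, hoc, fun A hA hAO hAC => hA.insert hAC fun q hq hqc => ?_⟩
      obtain ⟨hqo, hqO⟩ := mem_erase.1 (hAO q hq)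
      exact (le_max' _ _ (mem_filter.2 ⟨hqO, hqc⟩)).lt_of_ne hqo
  refine ⟨A, ⟨hA, hAnc⟩, fun B ⟨hB, hBnc⟩ => IsMatching.eq_of_agree_at_min
    (fun _ _ hBA hA => hA.mono hBA) ?_ hB hBnc hA hAnc⟩
  intro O C A₁ A₂ h₁ hA₁ h₂ hA₂ p₁ hp₁ p₂ hp₂ hsnd hmin
  exact le_antisymm
    (hA₂.le_fst h₂ hp₂ (hsnd ▸ hmin) (h₁.fst_mem hp₁) (hsnd ▸ h₁.fst_lt_snd p₁ hp₁))
    (hA₁.le_fst h₁ hp₁ hmin (h₂.fst_mem hp₂) (hsnd ▸ h₂.fst_lt_snd p₂ hp₂))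

theorem existsUnique_noNesting (h : IsOpenerCloserConfig O C) :
    ∃! A, IsMatching O C A ∧ NoNesting A := by
  obtain ⟨A, hA, hAnn⟩ := h.exists_isMatching (Φ := NoNesting) (by simp [NoNesting])
    fun O C hOC hC => by
      obtain ⟨o', ho', ho'c⟩ := hOC.exists_lt_min' hC
      have hO : O.Nonempty := ⟨o', ho'⟩
      refine ⟨O.min' hO, O.min'_mem hO, (O.min'_le o' ho').trans_lt ho'c,
        fun A hA hAO hAC => hA.insert hAC fun q hq => ?_⟩
      obtain ⟨hqo, hqO⟩ := mem_erase.1 (hAO q hq)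
      exact (O.min'_le _ hqO).lt_of_ne hqo.symm
  refine ⟨A, ⟨hA, hAnn⟩, fun B ⟨hB, hBnn⟩ => IsMatching.eq_of_agree_at_min
    (fun _ _ hBA hA => hA.mono hBA) ?_ hB hBnn hA hAnn⟩
  intro O C A₁ A₂ h₁ hA₁ h₂ hA₂ p₁ hp₁ p₂ hp₂ hsnd hmin
  exact le_antisymm (hA₁.fst_le h₁ hp₁ hmin (h₂.fst_mem hp₂))
    (hA₂.fst_le h₂ hp₂ (hsnd ▸ hmin) (h₁.fst_mem hp₁))

end ArcDiagram

namespace SetPartitionA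

open Finset ArcDiagram Relation

variable {n : ℕ}

theorem ext {P Q : SetPartitionA n} (h : P.blocks = Q.blocks) : P = Q := by
  cases P
  cases Q
  congr

theorem eq_of_mem_of_mem (P : SetPartitionA n) {B B' : Finset ℕ} (hB : B ∈ P.blocks)
    (hB' : B' ∈ P.blocks) {i : ℕ} (hi : i ∈ B) (hi' : i ∈ B') : B = B' :=
  by_contra fun h => disjoint_left.1 (P.disj B hB B' hB' h) hi hi'

theorem mem_Icc_of_mem (P : SetPartitionA n) {B : Finset ℕ} (hB : B ∈ P.blocks) {i : ℕ}
    (hi : i ∈ B) : i ∈ Icc 1 n :=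
  (P.cover i).1 ⟨B, hB, hi⟩

theorem mem_arcs {P : SetPartitionA n} {i j : ℕ} : (i, j) ∈ P.arcs ↔ P.IsArc i j := by
  refine ⟨fun h => (mem_filter.1 h).2, fun h => mem_filter.2 ⟨?_, h⟩⟩
  obtain ⟨-, B, hB, hi, hj, -⟩ := h
  exact mem_product.2 ⟨P.mem_Icc_of_mem hB hi, P.mem_Icc_of_mem hB hj⟩

theorem isArc_rightUnique (P : SetPartitionA n) : Relator.RightUnique P.IsArc := by
  rintro i j j' ⟨hij, B, hB, hiB, hjB, hj⟩ ⟨hij', B', hB', hiB', hjB', hj'⟩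
  obtain rfl := P.eq_of_mem_of_mem hB hB' hiB hiB'
  by_contra hne
  rcases lt_or_gt_of_ne hne with h | h
  exacts [hj' j hjB ⟨hij, h⟩, hj j' hjB' ⟨hij', h⟩]

theorem isArc_leftUnique (P : SetPartitionA n) : Relator.LeftUnique P.IsArc := by
  rintro i i' j ⟨hij, B, hB, hiB, hjB, hi⟩ ⟨hij', B', hB', hiB', hjB', hi'⟩
  obtain rfl := P.eq_of_mem_of_mem hB hB' hjB hjB'
  by_contra hne
  rcases lt_or_gt_of_ne hne with h | h
  exacts [hi i' hiB' ⟨h, hij'⟩, hi' i hiB ⟨h, hij⟩]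

theorem exists_isArc_of_lt (P : SetPartitionA n) {B : Finset ℕ} (hB : B ∈ P.blocks) {i j : ℕ}
    (hi : i ∈ B) (hj : j ∈ B) (hij : i < j) : ∃ k ∈ B, P.IsArc i k ∧ k ≤ j := by
  have hjmem : j ∈ B.filter (i < ·) := mem_filter.2 ⟨hj, hij⟩
  obtain ⟨hkB, hik⟩ := mem_filter.1 ((B.filter (i < ·)).min'_mem ⟨j, hjmem⟩)
  refine ⟨_, hkB, ⟨hik, B, hB, hi, hkB, fun m hm ⟨him, hmk⟩ => ?_⟩, min'_le _ _ hjmem⟩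
  exact (min'_le _ _ (mem_filter.2 ⟨hm, him⟩)).not_gt hmk

theorem exists_isArc_of_gt (P : SetPartitionA n) {B : Finset ℕ} (hB : B ∈ P.blocks) {i j : ℕ}
    (hi : i ∈ B) (hj : j ∈ B) (hji : j < i) : ∃ k, P.IsArc k i := by
  have hjmem : j ∈ B.filter (· < i) := mem_filter.2 ⟨hj, hji⟩
  obtain ⟨hkB, hki⟩ := mem_filter.1 ((B.filter (· < i)).max'_mem ⟨j, hjmem⟩)
  refine ⟨_, hki, B, hB, hkB, hi, fun m hm ⟨hkm, hmi⟩ => ?_⟩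
  exact (le_max' _ _ (mem_filter.2 ⟨hm, hmi⟩)).not_gt hkm

theorem openers_eq_image (P : SetPartitionA n) : P.openers = P.arcs.image Prod.fst := by
  ext i
  simp only [openers, mem_filter, mem_image]
  constructor
  · rintro ⟨-, B, hB, hiB, j, hjB, hij⟩
    obtain ⟨k, -, hk, -⟩ := P.exists_isArc_of_lt hB hiB hjB hij
    exact ⟨(i, k), mem_arcs.2 hk, rfl⟩
  · rintro ⟨⟨i, j⟩, hp, rfl⟩
    obtain ⟨hij, B, hB, hi, hj, -⟩ := mem_arcs.1 hp
    exact ⟨P.mem_Icc_of_mem hB hi, B, hB, hi, j, hj, hij⟩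

theorem closers_eq_image (P : SetPartitionA n) : P.closers = P.arcs.image Prod.snd := by
  ext j
  simp only [closers, mem_filter, mem_image]
  constructor
  · rintro ⟨-, B, hB, hjB, i, hiB, hij⟩
    obtain ⟨k, hk⟩ := P.exists_isArc_of_gt hB hjB hiB hij
    exact ⟨(k, j), mem_arcs.2 hk, rfl⟩
  · rintro ⟨⟨i, j⟩, hp, rfl⟩
    obtain ⟨hij, B, hB, hi, hj, -⟩ := mem_arcs.1 hp
    exact ⟨P.mem_Icc_of_mem hB hj, B, hB, hj, i, hi, hij⟩

theorem isMatching_arcs (P : SetPartitionA n) : IsMatching P.openers P.closers P.arcs where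
  fst_lt_snd _ h := (mem_arcs.1 h).1
  injOn_fst := by
    rintro ⟨i, j⟩ h ⟨i', j'⟩ h' (rfl : i = i')
    rw [P.isArc_rightUnique (mem_arcs.1 h) (mem_arcs.1 h')]
  injOn_snd := by
    rintro ⟨i, j⟩ h ⟨i', j'⟩ h' (rfl : j = j')
    rw [P.isArc_leftUnique (mem_arcs.1 h) (mem_arcs.1 h')]
  image_fst := P.openers_eq_image.symm
  image_snd := P.closers_eq_image.symm

theorem crossings_eq_zero_iff (P : SetPartitionA n) : P.crossings = 0 ↔ NoCrossing P.arcs := by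
  rw [crossings, card_eq_zero, filter_eq_empty_iff]
  exact ⟨fun h p hp q hq => h (x := (p, q)) (mem_product.2 ⟨hp, hq⟩),
    fun h x hx => h _ (mem_product.1 hx).1 _ (mem_product.1 hx).2⟩

theorem nestings_eq_zero_iff (P : SetPartitionA n) : P.nestings = 0 ↔ NoNesting P.arcs := by
  rw [nestings, card_eq_zero, filter_eq_empty_iff]
  exact ⟨fun h p hp q hq => h (x := (p, q)) (mem_product.2 ⟨hp, hq⟩),
    fun h x hx => h _ (mem_product.1 hx).1 _ (mem_product.1 hx).2⟩

def ofArcs (n : ℕ) (A : Finset (ℕ × ℕ)) : SetPartitionA n where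
  blocks := (Icc 1 n).image fun i => (Icc 1 n).filter (EqvGen (fun a b => (a, b) ∈ A) i)
  nonempty := by
    simp only [mem_image]
    rintro _ ⟨i, hi, rfl⟩
    exact ⟨i, mem_filter.2 ⟨hi, .refl i⟩⟩
  disj := by
    have heqv := EqvGen.is_equivalence fun a b => (a, b) ∈ A
    simp only [mem_image]
    rintro _ ⟨i, -, rfl⟩ _ ⟨i', -, rfl⟩ hne
    refine disjoint_left.2 fun k hk hk' => hne ?_
    have hii' := heqv.trans (mem_filter.1 hk).2 (heqv.symm (mem_filter.1 hk').2)
    ext j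
    simp only [mem_filter]
    exact and_congr_right fun _ => ⟨heqv.trans (heqv.symm hii'), heqv.trans hii'⟩
  cover i := by
    simp only [mem_image]
    constructor
    · rintro ⟨_, ⟨k, -, rfl⟩, hi⟩
      exact (mem_filter.1 hi).1
    · exact fun hi => ⟨_, ⟨i, hi, rfl⟩, mem_filter.2 ⟨hi, .refl i⟩⟩

theorem reflTransGen_of_mem (P : SetPartitionA n) {B : Finset ℕ} (hB : B ∈ P.blocks)
    {i j : ℕ} (hi : i ∈ B) (hj : j ∈ B) (hij : i ≤ j) :
    ReflTransGen (fun a b => (a, b) ∈ P.arcs) i j := by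
  rcases hij.eq_or_lt with rfl | hlt
  · exact .refl
  obtain ⟨k, hkB, hk, hkj⟩ := P.exists_isArc_of_lt hB hi hj hlt
  have hik := hk.1
  exact .head (mem_arcs.2 hk) (P.reflTransGen_of_mem hB hkB hj hkj)
termination_by j - i

theorem mem_iff_of_eqvGen (P : SetPartitionA n) {B : Finset ℕ} (hB : B ∈ P.blocks) {i j : ℕ}
    (h : EqvGen (fun a b => (a, b) ∈ P.arcs) i j) : i ∈ B ↔ j ∈ B := by
  induction h with
  | rel a b hab =>
    obtain ⟨-, B', hB', ha, hb, -⟩ := mem_arcs.1 hab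
    exact ⟨fun haB => P.eq_of_mem_of_mem hB hB' haB ha ▸ hb,
      fun hbB => P.eq_of_mem_of_mem hB hB' hbB hb ▸ ha⟩
  | refl => rfl
  | symm _ _ _ ih => exact ih.symm
  | trans _ _ _ _ _ ih₁ ih₂ => exact ih₁.trans ih₂

theorem filter_eqvGen_eq (P : SetPartitionA n) {B : Finset ℕ} (hB : B ∈ P.blocks) {i : ℕ}
    (hi : i ∈ B) : (Icc 1 n).filter (EqvGen (fun a b => (a, b) ∈ P.arcs) i) = B := by
  ext j
  rw [mem_filter]
  refine ⟨fun ⟨_, h⟩ => (P.mem_iff_of_eqvGen hB h).1 hi, fun hj => ⟨P.mem_Icc_of_mem hB hj, ?_⟩⟩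
  rcases le_total i j with hij | hji
  · exact EqvGen.reflTransGen_le_eqvGen _ _ _ (P.reflTransGen_of_mem hB hi hj hij)
  · exact .symm _ _ (EqvGen.reflTransGen_le_eqvGen _ _ _ (P.reflTransGen_of_mem hB hj hi hji))

theorem ofArcs_arcs (P : SetPartitionA n) : ofArcs n P.arcs = P := by
  refine ext (Finset.ext fun B => ?_)
  simp only [ofArcs, mem_image]
  constructor
  · rintro ⟨i, hi, rfl⟩
    obtain ⟨B, hB, hiB⟩ := (P.cover i).2 hi
    rwa [P.filter_eqvGen_eq hB hiB]
  · intro hB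
    obtain ⟨i, hi⟩ := P.nonempty B hB
    exact ⟨i, P.mem_Icc_of_mem hB hi, P.filter_eqvGen_eq hB hi⟩

theorem arcs_ofArcs {O C : Finset ℕ} {A : Finset (ℕ × ℕ)} (hA : IsMatching O C A)
    (hO : O ⊆ Icc 1 n) (hC : C ⊆ Icc 1 n) : (ofArcs n A).arcs = A := by
  have heqv := EqvGen.is_equivalence fun a b => (a, b) ∈ A
  have hmono : ∀ a b, (a, b) ∈ A → a ≤ b := fun _ _ h => (hA.fst_lt_snd _ h).le
  have hpath : ∀ {i j}, EqvGen (fun a b => (a, b) ∈ A) i j → i ≤ j →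
      ReflTransGen (fun a b => (a, b) ∈ A) i j :=
    fun h hij => h.reflTransGen_of_le hA.rightUnique hA.leftUnique hmono hij
  ext ⟨i, j⟩
  rw [mem_arcs]
  constructor
  · rintro ⟨hij, B, hB, hiB, hjB, hbetween⟩
    obtain ⟨m, -, rfl⟩ := mem_image.1 hB
    have hmi := (mem_filter.1 hiB).2
    obtain h | ⟨k, hik, hkj⟩ :=
      (hpath (heqv.trans (heqv.symm hmi) (mem_filter.1 hjB).2) hij.le).cases_head
    · exact absurd h hij.ne
    have hkB : k ∈ (Icc 1 n).filter (EqvGen (fun a b => (a, b) ∈ A) m) :=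
      mem_filter.2 ⟨hC (hA.snd_mem hik), heqv.trans hmi (.rel _ _ hik)⟩
    obtain rfl : k = j := (hkj.le hmono).eq_of_not_lt fun hlt =>
      hbetween k hkB ⟨hA.fst_lt_snd _ hik, hlt⟩
    exact hik
  · intro hij
    have hi := hO (hA.fst_mem hij)
    refine ⟨hA.fst_lt_snd _ hij, _, mem_image_of_mem _ hi, mem_filter.2 ⟨hi, .refl _⟩,
      mem_filter.2 ⟨hC (hA.snd_mem hij), .rel _ _ hij⟩, fun k hk ⟨hik, hkj⟩ => ?_⟩
    obtain h | ⟨l, hil, hlk⟩ := (hpath (mem_filter.1 hk).2 hik.le).cases_head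
    · exact hik.ne h
    obtain rfl := hA.rightUnique hil hij
    exact (hlk.le hmono).not_gt hkj

theorem existsUnique_of_existsUnique_isMatching {Φ : Finset (ℕ × ℕ) → Prop} {O C : Finset ℕ}
    (hO : O ⊆ Icc 1 n) (hC : C ⊆ Icc 1 n) (h : ∃! A, IsMatching O C A ∧ Φ A) :
    ∃! P : SetPartitionA n, Φ P.arcs ∧ P.openers = O ∧ P.closers = C := by
  obtain ⟨A, ⟨hA, hΦ⟩, huniq⟩ := h
  have harcs := arcs_ofArcs hA hO hC
  refine ⟨ofArcs n A, ⟨by rwa [harcs], ?_, ?_⟩, ?_⟩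
  · rw [openers_eq_image, harcs, hA.image_fst]
  · rw [closers_eq_image, harcs, hA.image_snd]
  · rintro P ⟨hΦP, rfl, rfl⟩
    rw [← huniq P.arcs ⟨P.isMatching_arcs, hΦP⟩, ofArcs_arcs]

end SetPartitionA

theorem stmt2_general (n : ℕ) (O C : Finset ℕ)
    (hO : O ⊆ Finset.Icc 1 n) (hC : C ⊆ Finset.Icc 1 n)
    (hcard : O.card = C.card)
    (hdom : ∀ k : ℕ, k < n → (C ∩ Finset.Icc 1 (k + 1)).card ≤ (O ∩ Finset.Icc 1 k).card) :
    (∃! P : SetPartitionA n, P.crossings = 0 ∧ P.openers = O ∧ P.closers = C) ∧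
    (∃! P : SetPartitionA n, P.nestings = 0 ∧ P.openers = O ∧ P.closers = C) := by
  have hconfig := ArcDiagram.isOpenerCloserConfig_of_subset_Icc hO hC hcard hdom
  simp only [SetPartitionA.crossings_eq_zero_iff, SetPartitionA.nestings_eq_zero_iff]
  exact ⟨SetPartitionA.existsUnique_of_existsUnique_isMatching hO hC
      (ArcDiagram.existsUnique_noCrossing hconfig),
    SetPartitionA.existsUnique_of_existsUnique_isMatching hO hC
      (ArcDiagram.existsUnique_noNesting hconfig)⟩

theorem stmt2 (n : ℕ) (hn : 0 < n) (O C : Finset ℕ)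
    (hO : O ⊆ Finset.Icc 1 n) (hC : C ⊆ Finset.Icc 1 n)
    (hcard : O.card = C.card)
    (hdom : ∀ k : ℕ, k < n → (C ∩ Finset.Icc 1 (k + 1)).card ≤ (O ∩ Finset.Icc 1 k).card) :
    (∃! P : SetPartitionA n, P.crossings = 0 ∧ P.openers = O ∧ P.closers = C) ∧
    (∃! P : SetPartitionA n, P.nestings = 0 ∧ P.openers = O ∧ P.closers = C) :=
  stmt2_general n O C hO hC hcard hdom
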